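/- arXiv:2205.01539 — 4 statements merged into one kernel-verified Lean document; each statement's English description precedes it below -/
import Mathlib

section
/- Let (M,d) be a metric space, X ⊆ M a subset, and σ ⊆ X a nonempty finite subset with diam(σ) = r. Fix any x₀ ∈ σ. Then every y ∈ X̄(σ) satisfies d(y, x₀) ≤ 2r. Consequently, the Vietoris–Rips complex R(X̄(σ); 2r) is a cone with apex x₀: x₀ ∈ X̄(σ), and for every nonempty finite τ ⊆ X̄(σ) with τ ∈ R(X̄(σ); 2r), also τ ∪ {x₀} ∈ R(X̄(σ); 2r). -/
/-- The Vietoris–Rips complex of a subset `X` at scale `r`. -/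
def VRips {M : Type*} [PseudoMetricSpace M] (X : Set M) (r : ℝ) : Set (Finset M) :=
  {σ | σ.Nonempty ∧ ↑σ ⊆ X ∧ ∀ x ∈ σ, ∀ y ∈ σ, dist x y ≤ r}

/-- The witness set `X(S)` of a finite set `S`: points of `X` within distance `diam S`
of every point of `S`. -/
def witnessSet {M : Type*} [MetricSpace M] (X : Set M) (S : Finset M) : Set M :=
  {y ∈ X | ∀ x ∈ S, dist y x ≤ Metric.diam (S : Set M)}

/-- `X̄(σ)`: the union of the witness sets of all nonempty subsets of `σ`. -/
def witnessUnion {M : Type*} [MetricSpace M] (X : Set M) (σ : Finset M) : Set M :=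
  ⋃ S ∈ {S : Finset M | S.Nonempty ∧ S ⊆ σ}, witnessSet X S

/-! A witness `y` of `S ⊆ σ` is within `diam S ≤ diam σ` of some `s ∈ S`, and `s` is within
`diam σ` of `x₀`, so the triangle inequality gives `d(y, x₀) ≤ 2 diam σ`. A Rips complex in
which some vertex is within the scale of every point is a cone on that vertex. -/

theorem insert_mem_VRips {M : Type*} [PseudoMetricSpace M] [DecidableEq M] {Y : Set M}
    {r : ℝ} {x₀ : M} (hx₀ : x₀ ∈ Y) (hclose : ∀ y ∈ Y, dist y x₀ ≤ r) {τ : Finset M}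
    (hτ : τ ∈ VRips Y r) : insert x₀ τ ∈ VRips Y r := by
  obtain ⟨⟨t, ht⟩, hτY, hτr⟩ := hτ
  have hr : 0 ≤ r := dist_nonneg.trans (hclose t (hτY ht))
  refine ⟨Finset.insert_nonempty _ _, ?_, ?_⟩
  · rw [Finset.coe_insert]
    exact Set.insert_subset hx₀ hτY
  · intro x hx y hy
    rcases Finset.mem_insert.1 hx with hx | hx <;> rcases Finset.mem_insert.1 hy with hy | hy
    · simpa [hx, hy] using hr
    · rw [hx, dist_comm]; exact hclose y (hτY hy)
    · rw [hy]; exact hclose x (hτY hx)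
    · exact hτr x hx y hy

section witness

variable {M : Type*} [MetricSpace M] {X : Set M}

theorem mem_witnessUnion {σ : Finset M} {y : M} :
    y ∈ witnessUnion X σ ↔ ∃ S : Finset M, S.Nonempty ∧ S ⊆ σ ∧ y ∈ witnessSet X S := by
  simp [witnessUnion, and_assoc]

theorem mem_witnessSet_of_mem {S : Finset M} {x : M} (hxS : x ∈ S) (hxX : x ∈ X) :
    x ∈ witnessSet X S :=
  ⟨hxX, fun _ hy => Metric.dist_le_diam_of_mem S.finite_toSet.isBounded hxS hy⟩

theorem mem_witnessUnion_of_mem {σ : Finset M} {x : M} (hxσ : x ∈ σ) (hxX : x ∈ X) :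
    x ∈ witnessUnion X σ :=
  mem_witnessUnion.2 ⟨σ, ⟨x, hxσ⟩, subset_rfl, mem_witnessSet_of_mem hxσ hxX⟩

theorem dist_le_two_mul_diam_of_mem_witnessUnion {σ : Finset M} {x₀ y : M} (hx₀ : x₀ ∈ σ)
    (hy : y ∈ witnessUnion X σ) : dist y x₀ ≤ 2 * Metric.diam (σ : Set M) := by
  obtain ⟨S, ⟨s, hs⟩, hSσ, -, hyS⟩ := mem_witnessUnion.1 hy
  have hσb := σ.finite_toSet.isBounded
  have hdiamS : Metric.diam (S : Set M) ≤ Metric.diam (σ : Set M) :=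
    Metric.diam_mono (Finset.coe_subset.2 hSσ) hσb
  calc dist y x₀ ≤ dist y s + dist s x₀ := dist_triangle _ _ _
    _ ≤ Metric.diam (σ : Set M) + Metric.diam (σ : Set M) :=
        add_le_add ((hyS s hs).trans hdiamS) (Metric.dist_le_diam_of_mem hσb (hSσ hs) hx₀)
    _ = 2 * Metric.diam (σ : Set M) := (two_mul _).symm

end witness

theorem witnessUnion_cone_general {M : Type*} [MetricSpace M] [DecidableEq M] (X : Set M) (σ : Finset M)
    (hσX : ↑σ ⊆ X) (r : ℝ) (hdiam : Metric.diam (σ : Set M) = r)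
    (x₀ : M) (hx₀ : x₀ ∈ σ) :
    (∀ y ∈ witnessUnion X σ, dist y x₀ ≤ 2 * r) ∧
    x₀ ∈ witnessUnion X σ ∧
    ∀ τ : Finset M, τ.Nonempty → ↑τ ⊆ witnessUnion X σ →
      τ ∈ VRips (witnessUnion X σ) (2 * r) →
      insert x₀ τ ∈ VRips (witnessUnion X σ) (2 * r) := by
  subst hdiam
  have hclose : ∀ y ∈ witnessUnion X σ, dist y x₀ ≤ 2 * Metric.diam (σ : Set M) :=
    fun _ hy => dist_le_two_mul_diam_of_mem_witnessUnion hx₀ hy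
  have hx₀mem : x₀ ∈ witnessUnion X σ := mem_witnessUnion_of_mem hx₀ (hσX hx₀)
  exact ⟨hclose, hx₀mem, fun _ _ _ hτ => insert_mem_VRips hx₀mem hclose hτ⟩

/-- Every point of `X̄(σ)` is within distance `2r` of any fixed vertex `x₀ ∈ σ`, where
`r = diam σ`; consequently the Rips complex `R(X̄(σ); 2r)` is a cone with apex `x₀`. -/
theorem witnessUnion_cone {M : Type*} [MetricSpace M] [DecidableEq M] (X : Set M) (σ : Finset M)
    (hσ : σ.Nonempty) (hσX : ↑σ ⊆ X) (r : ℝ) (hdiam : Metric.diam (σ : Set M) = r)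
    (x₀ : M) (hx₀ : x₀ ∈ σ) :
    (∀ y ∈ witnessUnion X σ, dist y x₀ ≤ 2 * r) ∧
    x₀ ∈ witnessUnion X σ ∧
    ∀ τ : Finset M, τ.Nonempty → ↑τ ⊆ witnessUnion X σ →
      τ ∈ VRips (witnessUnion X σ) (2 * r) →
      insert x₀ τ ∈ VRips (witnessUnion X σ) (2 * r) :=
  witnessUnion_cone_general X σ hσX r hdiam x₀ hx₀
end

section
/- Let (M,d) be a metric space, X ⊆ M a subset, and σ ⊆ X a nonempty finite subset with diam(σ) = r. Then any two points y, y' ∈ X̄(σ) satisfy d(y, y') ≤ 3r. Consequently, for every subset V ⊆ X̄(σ), every nonempty finite subset of V belongs to the Vietoris–Rips complex R(V; 3r); that is, R(V; 3r) is the full simplex on V. -/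
theorem exists_mem_dist_le_diam_of_mem_witnessUnion {M : Type*} [MetricSpace M] {X : Set M}
    {σ : Finset M} {y : M} (hy : y ∈ witnessUnion X σ) :
    ∃ x ∈ σ, dist y x ≤ Metric.diam (σ : Set M) := by
  simp only [witnessUnion, Set.mem_iUnion] at hy
  obtain ⟨S, ⟨⟨x, hx⟩, hSσ⟩, -, hyS⟩ := hy
  have hdiam : Metric.diam (S : Set M) ≤ Metric.diam (σ : Set M) :=
    Metric.diam_mono (Finset.coe_subset.mpr hSσ) σ.finite_toSet.isBounded
  exact ⟨x, hSσ hx, (hyS x hx).trans hdiam⟩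

theorem dist_le_three_mul_diam_of_mem_witnessUnion {M : Type*} [MetricSpace M] {X : Set M}
    {σ : Finset M} {y y' : M} (hy : y ∈ witnessUnion X σ) (hy' : y' ∈ witnessUnion X σ) :
    dist y y' ≤ 3 * Metric.diam (σ : Set M) := by
  obtain ⟨x, hx, hyx⟩ := exists_mem_dist_le_diam_of_mem_witnessUnion hy
  obtain ⟨x', hx', hy'x'⟩ := exists_mem_dist_le_diam_of_mem_witnessUnion hy'
  have hxx' : dist x x' ≤ Metric.diam (σ : Set M) :=
    Metric.dist_le_diam_of_mem σ.finite_toSet.isBounded hx hx'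
  calc dist y y' ≤ dist y x + dist x x' + dist x' y' := dist_triangle4 _ _ _ _
    _ ≤ 3 * Metric.diam (σ : Set M) := by rw [dist_comm x' y']; linarith

theorem mem_VRips_of_dist_le {M : Type*} [PseudoMetricSpace M] {V : Set M} {r : ℝ}
    (hV : ∀ y ∈ V, ∀ y' ∈ V, dist y y' ≤ r) {τ : Finset M} (hτ : τ.Nonempty) (hτV : ↑τ ⊆ V) :
    τ ∈ VRips V r :=
  ⟨hτ, hτV, fun a ha b hb => hV a (hτV ha) b (hτV hb)⟩

theorem witnessUnion_full_simplex_general {M : Type*} [MetricSpace M] (X : Set M) (σ : Finset M)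
    (r : ℝ) (hdiam : Metric.diam (σ : Set M) = r) :
    (∀ y ∈ witnessUnion X σ, ∀ y' ∈ witnessUnion X σ, dist y y' ≤ 3 * r) ∧
    ∀ V : Set M, V ⊆ witnessUnion X σ →
      ∀ τ : Finset M, τ.Nonempty → ↑τ ⊆ V → τ ∈ VRips V (3 * r) := by
  subst hdiam
  have hdist (y) (hy : y ∈ witnessUnion X σ) (y') (hy' : y' ∈ witnessUnion X σ) :=
    dist_le_three_mul_diam_of_mem_witnessUnion hy hy'
  exact ⟨hdist, fun V hV _ => mem_VRips_of_dist_le fun y hy y' hy' => hdist y (hV hy) y' (hV hy')⟩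

/-- Any two points of `X̄(σ)` are within distance `3r`, where `r = diam σ`; hence for any
`V ⊆ X̄(σ)`, the Rips complex `R(V; 3r)` is the full simplex on `V`. -/
theorem witnessUnion_full_simplex {M : Type*} [MetricSpace M] (X : Set M) (σ : Finset M)
    (hσ : σ.Nonempty) (hσX : ↑σ ⊆ X) (r : ℝ) (hdiam : Metric.diam (σ : Set M) = r) :
    (∀ y ∈ witnessUnion X σ, ∀ y' ∈ witnessUnion X σ, dist y y' ≤ 3 * r) ∧
    ∀ V : Set M, V ⊆ witnessUnion X σ →
      ∀ τ : Finset M, τ.Nonempty → ↑τ ⊆ V → τ ∈ VRips V (3 * r) :=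
  witnessUnion_full_simplex_general X σ r hdiam
end

section
/- With the greedy landmark cover construction: let x_0, …, x_q ∈ X be points whose maximum pairwise distance equals r with r > 0. Then there exists a point ℓ ∈ ⋂_{j=0}^{q} U_{x_j} such that d(x_j, ℓ) ≤ c·r/(c−1) for all j = 0, …, q. -/
/-!
Put `T = r / (c - 1)`, so that `r + T = c * T`, and let `m` be the first level with
`d_H(L m, X) ≤ T`; it exists because `L n = X`. If `m = 0`, every point of `X` lies within
`d_H({x₀}, X) ≤ T` of `x₀`, and `x₀ ∈ L 1` is a common witness. Otherwise the landmark
`ℓ ∈ L m` nearest to `x 0` is within `T` of `x 0`, hence within `r + T = c * T` of every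
`x j`, and `c * T < c * d_H(L (m - 1), X)` by minimality of `m`.
-/

open Metric

section HausdorffDist

variable {M : Type*} [MetricSpace M] {A X : Set M} {y : M}

theorem infDist_le_hausdorffDist_of_subset (hX : Bornology.IsBounded X) (hA : A.Nonempty)
    (hAX : A ⊆ X) (hy : y ∈ X) : infDist y A ≤ hausdorffDist A X := by
  rw [hausdorffDist_comm]
  exact infDist_le_hausdorffDist_of_mem hy <|
    hausdorffEDist_ne_top_of_nonempty_of_bounded (hA.mono hAX) hA hX (hX.subset hAX)

theorem dist_le_hausdorffDist_singleton (hX : Bornology.IsBounded X) (x₀ : M) (hx₀ : x₀ ∈ X)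
    (hy : y ∈ X) : dist y x₀ ≤ hausdorffDist {x₀} X := by
  simpa only [infDist_singleton] using
    infDist_le_hausdorffDist_of_subset hX (Set.singleton_nonempty x₀)
      (Set.singleton_subset_iff.2 hx₀) hy

theorem exists_mem_dist_le_hausdorffDist (hX : X.Finite) (hA : A.Nonempty) (hAX : A ⊆ X)
    (hy : y ∈ X) : ∃ ℓ ∈ A, dist y ℓ ≤ hausdorffDist A X := by
  obtain ⟨ℓ, hℓA, hℓ⟩ := (hX.subset hAX).isCompact.exists_infDist_eq_dist hA y
  exact ⟨ℓ, hℓA, hℓ ▸ infDist_le_hausdorffDist_of_subset hX.isBounded hA hAX hy⟩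

end HausdorffDist

theorem Nat.exists_first_of_le {p : ℕ → Prop} {n : ℕ} (hn : p n) :
    ∃ m ≤ n, p m ∧ ∀ k < m, ¬p k := by
  classical
  exact ⟨Nat.find ⟨n, hn⟩, Nat.find_min' _ hn, Nat.find_spec ⟨n, hn⟩,
    fun _ hk => Nat.find_min _ hk⟩

theorem exists_landmark_near_of_nested {M ι : Type*} [MetricSpace M] {X : Set M}
    (hX : X.Finite) {x₀ : M} {n : ℕ} (hn : 0 < n) {L : ℕ → Set M} (hL : Monotone L)
    (hL0 : L 0 = {x₀}) (hLn : L n = X) {c : ℝ} (hc : 1 < c) {x : ι → M} (hx : ∀ j, x j ∈ X)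
    {j₀ : ι} {r : ℝ} (hr : ∀ j, dist (x j) (x j₀) ≤ r) :
    ∃ i ∈ Finset.Icc 1 n, ∃ ℓ ∈ L i, ∀ j,
      dist (x j) ℓ ≤ c * hausdorffDist (L (i - 1)) X ∧ dist (x j) ℓ ≤ c * (r / (c - 1)) := by
  have hLX : ∀ i ≤ n, L i ⊆ X := fun i hi => hLn ▸ hL hi
  have hx₀L : ∀ i, x₀ ∈ L i := fun i => hL (Nat.zero_le i) (hL0 ▸ rfl)
  have hc1 : 0 < c - 1 := sub_pos.2 hc
  set T := r / (c - 1)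
  have hT : 0 ≤ T := div_nonneg (dist_nonneg.trans (hr j₀)) hc1.le
  have hrT : r + T = c * T := by simp only [T]; field_simp [hc1.ne']; ring
  obtain ⟨m, hmn, hm, hcoarse⟩ := Nat.exists_first_of_le (p := fun m => hausdorffDist (L m) X ≤ T)
    (n := n) (by simpa only [hLn, hausdorffDist_self_zero] using hT)
  cases m with
  | zero =>
    have hdist : ∀ j, dist (x j) x₀ ≤ hausdorffDist (L 0) X := fun j =>
      hL0 ▸ dist_le_hausdorffDist_singleton hX.isBounded x₀ (hLX 0 (Nat.zero_le n) (hx₀L 0)) (hx j)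
    refine ⟨1, Finset.mem_Icc.2 ⟨le_rfl, hn⟩, x₀, hx₀L 1, fun j => ⟨?_, ?_⟩⟩
    · exact (hdist j).trans (le_mul_of_one_le_left hausdorffDist_nonneg hc.le)
    · exact (hdist j).trans (hm.trans (le_mul_of_one_le_left hT hc.le))
  | succ k =>
    obtain ⟨ℓ, hℓL, hℓ⟩ :=
      exists_mem_dist_le_hausdorffDist hX ⟨x₀, hx₀L (k + 1)⟩ (hLX _ hmn) (hx j₀)
    have hdist : ∀ j, dist (x j) ℓ ≤ c * T := fun j => by
      linarith [dist_triangle (x j) (x j₀) ℓ, hr j]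
    have hTk : T < hausdorffDist (L k) X := not_le.1 (hcoarse k k.lt_succ_self)
    refine ⟨k + 1, Finset.mem_Icc.2 ⟨k.succ_pos, hmn⟩, ℓ, hℓL, fun j => ⟨?_, hdist j⟩⟩
    exact (hdist j).trans (mul_le_mul_of_nonneg_left hTk.le (zero_lt_one.trans hc).le)

theorem sparse_witness_general {M : Type*} [MetricSpace M] (X : Set M) (hXfin : X.Finite)
    (x₀ : M)
    (n : ℕ) (hn : 0 < n) (L : ℕ → Set M)
    (hL0 : L 0 = {x₀}) (hmono : ∀ i, L i ⊆ L (i + 1)) (hLn : L n = X)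
    (c : ℝ) (hc : 1 < c)
    (U : M → Set M)
    (hU : ∀ x, U x =
      ⋃ i ∈ Finset.Icc 1 n, {ℓ ∈ L i | dist ℓ x ≤ c * Metric.hausdorffDist (L (i - 1)) X})
    (q : ℕ) (x : Fin (q + 1) → M) (hx : ∀ j, x j ∈ X)
    (r : ℝ)
    (hle : ∀ i j, dist (x i) (x j) ≤ r) :
    ∃ ℓ, (∀ j, ℓ ∈ U (x j)) ∧ ∀ j, dist (x j) ℓ ≤ c * r / (c - 1) := by
  obtain ⟨i, hi, ℓ, hℓL, hℓ⟩ := exists_landmark_near_of_nested hXfin hn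
    (monotone_nat_of_le_succ hmono) hL0 hLn hc hx (fun j => hle j 0)
  refine ⟨ℓ, fun j => ?_, fun j => mul_div_assoc c r (c - 1) ▸ (hℓ j).2⟩
  rw [hU]
  exact Set.mem_biUnion hi ⟨hℓL, dist_comm ℓ (x j) ▸ (hℓ j).1⟩

/-- Sparse-witness proposition for the greedy landmark cover: given nested landmark sets
`{x₀} = L 0 ⊆ L 1 ⊆ ⋯ ⊆ L n = X` with cover sets
`U x = ⋃_{i=1}^{n} {ℓ ∈ L i | d(ℓ, x) ≤ c·d_H(L (i-1), X)}`, any points `x₀, …, x_q ∈ X`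
with maximum pairwise distance `r > 0` admit a common witness `ℓ ∈ ⋂_j U (x j)` with
`d(x j, ℓ) ≤ c·r/(c-1)` for all `j`. -/
theorem sparse_witness {M : Type*} [MetricSpace M] (X : Set M) (hXfin : X.Finite)
    (x₀ : M) (hx₀ : x₀ ∈ X)
    (n : ℕ) (hn : 0 < n) (L : ℕ → Set M)
    (hL0 : L 0 = {x₀}) (hmono : ∀ i, L i ⊆ L (i + 1)) (hLn : L n = X)
    (c : ℝ) (hc : 1 < c)
    (U : M → Set M)
    (hU : ∀ x, U x =
      ⋃ i ∈ Finset.Icc 1 n, {ℓ ∈ L i | dist ℓ x ≤ c * Metric.hausdorffDist (L (i - 1)) X})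
    (q : ℕ) (x : Fin (q + 1) → M) (hx : ∀ j, x j ∈ X)
    (r : ℝ) (hr : 0 < r)
    (hle : ∀ i j, dist (x i) (x j) ≤ r) (heq : ∃ i j, dist (x i) (x j) = r) :
    ∃ ℓ, (∀ j, ℓ ∈ U (x j)) ∧ ∀ j, dist (x j) ℓ ≤ c * r / (c - 1) :=
  sparse_witness_general X hXfin x₀ n hn L hL0 hmono hLn c hc U hU q x hx r hle
end

section
/- Let (M,d) be a metric space, X ⊆ M a subset, σ ⊆ X a nonempty finite subset with diam(σ) = r, and c > 1. Suppose f assigns to each nonempty subset τ ⊆ σ a point f(τ) ∈ M such that d(x, f(τ)) ≤ (c/(c−1))·diam(τ) for every x ∈ τ. Let ℓ = f(σ) and let C = σ ∪ { f(τ) : ∅ ≠ τ ⊆ σ }. Then every y ∈ C satisfies d(y, ℓ) ≤ (2c/(c−1))·r. Consequently, the Vietoris–Rips complex R(C; (2c/(c−1))·r) is a cone with apex ℓ: for every nonempty finite τ' ⊆ C with τ' ∈ R(C; (2c/(c−1))·r), also τ' ∪ {ℓ} ∈ R(C; (2c/(c−1))·r). -/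
/-! Each witness `f τ` is within `k · diam τ ≤ k · diam σ` of any vertex `x ∈ τ ⊆ σ`, and that vertex is
within `k · diam σ` of the apex `f σ`; the triangle inequality puts the whole carrier in the closed
`2k · diam σ`-ball around the apex, so adding the apex to a Rips simplex keeps it a Rips simplex. -/

theorem VRips.insert_mem_of_forall_dist_le {M : Type*} [PseudoMetricSpace M] [DecidableEq M]
    {C : Set M} {R : ℝ} {ℓ : M} (hℓ : ℓ ∈ C) (hR : ∀ y ∈ C, dist y ℓ ≤ R) {τ : Finset M}
    (hτ : τ ∈ VRips C R) : insert ℓ τ ∈ VRips C R := by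
  obtain ⟨-, hτC, hτR⟩ := hτ
  refine ⟨Finset.insert_nonempty ℓ τ, ?_, ?_⟩
  · rw [Finset.coe_insert]
    exact Set.insert_subset hℓ hτC
  · intro x hx y hy
    rw [Finset.mem_insert] at hx hy
    rcases hx with rfl | hx <;> rcases hy with rfl | hy
    · exact hR _ hℓ
    · exact dist_comm y x ▸ hR y (hτC hy)
    · exact hR x (hτC hx)
    · exact hτR x hx y hy

def witnessCarrier {M : Type*} (σ : Finset M) (f : Finset M → M) : Set M :=
  ↑σ ∪ {y | ∃ τ : Finset M, τ.Nonempty ∧ τ ⊆ σ ∧ y = f τ}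

theorem apex_mem_witnessCarrier {M : Type*} {σ : Finset M} {f : Finset M → M} (hσ : σ.Nonempty) :
    f σ ∈ witnessCarrier σ f :=
  Or.inr ⟨σ, hσ, subset_rfl, rfl⟩

section WitnessCarrier

variable {M : Type*} [PseudoMetricSpace M]

def IsDiamWitness (k : ℝ) (σ : Finset M) (f : Finset M → M) : Prop :=
  ∀ τ : Finset M, τ.Nonempty → τ ⊆ σ → ∀ x ∈ τ, dist x (f τ) ≤ k * Metric.diam (τ : Set M)

variable {k : ℝ} {σ : Finset M} {f : Finset M → M}

theorem IsDiamWitness.dist_apex_le (hf : IsDiamWitness k σ f) (hσ : σ.Nonempty) {x : M}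
    (hx : x ∈ σ) : dist x (f σ) ≤ k * Metric.diam (σ : Set M) :=
  hf σ hσ subset_rfl x hx

theorem IsDiamWitness.dist_le (hf : IsDiamWitness k σ f) (hk : 0 ≤ k) {τ : Finset M}
    (hτ : τ.Nonempty) (hτσ : τ ⊆ σ) {x : M} (hx : x ∈ τ) :
    dist (f τ) x ≤ k * Metric.diam (σ : Set M) := by
  have hdiam : Metric.diam (τ : Set M) ≤ Metric.diam (σ : Set M) :=
    Metric.diam_mono (Finset.coe_subset.mpr hτσ) σ.finite_toSet.isBounded
  calc dist (f τ) x = dist x (f τ) := dist_comm _ _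
    _ ≤ k * Metric.diam (τ : Set M) := hf τ hτ hτσ x hx
    _ ≤ k * Metric.diam (σ : Set M) := mul_le_mul_of_nonneg_left hdiam hk

theorem IsDiamWitness.dist_apex_le_of_mem_witnessCarrier (hf : IsDiamWitness k σ f) (hk : 0 ≤ k)
    (hσ : σ.Nonempty) {y : M} (hy : y ∈ witnessCarrier σ f) :
    dist y (f σ) ≤ 2 * k * Metric.diam (σ : Set M) := by
  have hkd : 0 ≤ k * Metric.diam (σ : Set M) := mul_nonneg hk Metric.diam_nonneg
  rcases hy with hy | ⟨τ, ⟨x, hx⟩, hτσ, rfl⟩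
  · linarith [hf.dist_apex_le hσ hy]
  · calc dist (f τ) (f σ) ≤ dist (f τ) x + dist x (f σ) := dist_triangle _ _ _
      _ ≤ k * Metric.diam (σ : Set M) + k * Metric.diam (σ : Set M) :=
        add_le_add (hf.dist_le hk ⟨x, hx⟩ hτσ hx) (hf.dist_apex_le hσ (hτσ hx))
      _ = 2 * k * Metric.diam (σ : Set M) := by ring

end WitnessCarrier

theorem sparse_carrier_cone_general {M : Type*} [MetricSpace M] [DecidableEq M] (σ : Finset M)
    (hσ : σ.Nonempty)
    (r c : ℝ) (hc : 1 < c) (hdiam : Metric.diam (σ : Set M) = r)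
    (f : Finset M → M)
    (hf : ∀ τ : Finset M, τ.Nonempty → τ ⊆ σ →
      ∀ x ∈ τ, dist x (f τ) ≤ (c / (c - 1)) * Metric.diam (τ : Set M))
    (ℓ : M) (hℓ : ℓ = f σ)
    (C : Set M) (hC : C = ↑σ ∪ {y | ∃ τ : Finset M, τ.Nonempty ∧ τ ⊆ σ ∧ y = f τ}) :
    (∀ y ∈ C, dist y ℓ ≤ (2 * c / (c - 1)) * r) ∧
    ∀ τ' : Finset M, τ'.Nonempty → ↑τ' ⊆ C → τ' ∈ VRips C ((2 * c / (c - 1)) * r) →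
      insert ℓ τ' ∈ VRips C ((2 * c / (c - 1)) * r) := by
  change C = witnessCarrier σ f at hC
  subst hℓ hC hdiam
  have hk : 0 ≤ c / (c - 1) := div_nonneg (by linarith) (by linarith)
  have hball : ∀ y ∈ witnessCarrier σ f,
      dist y (f σ) ≤ (2 * c / (c - 1)) * Metric.diam (σ : Set M) := by
    intro y hy
    rw [mul_div_assoc]
    exact IsDiamWitness.dist_apex_le_of_mem_witnessCarrier hf hk hσ hy
  exact ⟨hball, fun τ' _ _ hτ' =>
    VRips.insert_mem_of_forall_dist_le (apex_mem_witnessCarrier hσ) hball hτ'⟩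

/-- If `f` assigns to each nonempty face `τ ⊆ σ` a witness point `f τ` with
`d(x, f τ) ≤ (c/(c-1))·diam τ` for all `x ∈ τ`, then every point of
`C = σ ∪ {f τ : ∅ ≠ τ ⊆ σ}` is within `(2c/(c-1))·r` of `ℓ = f σ`, where `r = diam σ`;
consequently `R(C; (2c/(c-1))·r)` is a cone with apex `ℓ`. -/
theorem sparse_carrier_cone {M : Type*} [MetricSpace M] [DecidableEq M] (X : Set M) (σ : Finset M)
    (hσ : σ.Nonempty) (hσX : ↑σ ⊆ X)
    (r c : ℝ) (hc : 1 < c) (hdiam : Metric.diam (σ : Set M) = r)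
    (f : Finset M → M)
    (hf : ∀ τ : Finset M, τ.Nonempty → τ ⊆ σ →
      ∀ x ∈ τ, dist x (f τ) ≤ (c / (c - 1)) * Metric.diam (τ : Set M))
    (ℓ : M) (hℓ : ℓ = f σ)
    (C : Set M) (hC : C = ↑σ ∪ {y | ∃ τ : Finset M, τ.Nonempty ∧ τ ⊆ σ ∧ y = f τ}) :
    (∀ y ∈ C, dist y ℓ ≤ (2 * c / (c - 1)) * r) ∧
    ∀ τ' : Finset M, τ'.Nonempty → ↑τ' ⊆ C → τ' ∈ VRips C ((2 * c / (c - 1)) * r) →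
      insert ℓ τ' ∈ VRips C ((2 * c / (c - 1)) * r) :=
  sparse_carrier_cone_general σ hσ r c hc hdiam f hf ℓ hℓ C hC
end
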